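/- Let ĉ, c ∈ W* be cost vectors with ‖ĉ − c‖ < ν_S(ĉ). Then w*(c) = w*(ĉ) and w*(2ĉ − c) = w*(ĉ), and consequently ℓ_SPO+(ĉ, c) = 0 and ℓ_SPO(ĉ, c) = 0. -/

import Mathlib

set_option linter.unusedSectionVars false


open MeasureTheory

variable {W : Type*} [NormedAddCommGroup W] [NormedSpace ℝ W] [FiniteDimensional ℝ W]

/-- The set of optimal solutions of `min_{w ∈ conv V} c w`. -/
def Opt (V : Set W) (c : W →L[ℝ] ℝ) : Set W :=
  {w ∈ convexHull ℝ V | ∀ w' ∈ convexHull ℝ V, c w ≤ c w'}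

/-- The set of degenerate cost vectors. -/
def Degen (V : Set W) : Set (W →L[ℝ] ℝ) :=
  {c | ∃ w₁ ∈ Opt V c, ∃ w₂ ∈ Opt V c, w₁ ≠ w₂}

/-- The distance to degeneracy `ν_S`. -/
noncomputable def nuS (V : Set W) (c : W →L[ℝ] ℝ) : ℝ :=
  Metric.infDist c (Degen V)

/-- The SPO loss `ℓ_SPO(ĉ, c) = c(w*(ĉ)) − c(w*(c))`. -/
noncomputable def SPOLoss (wstar : (W →L[ℝ] ℝ) → W) (chat c : W →L[ℝ] ℝ) : ℝ :=
  c (wstar chat) - c (wstar c)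

/-- The SPO+ loss `ℓ_SPO+(ĉ, c) = sup_{w ∈ S} (c − 2ĉ)(w) + 2ĉ(w*(c)) − c(w*(c))`. -/
noncomputable def SPOPlusLoss (V : Set W) (wstar : (W →L[ℝ] ℝ) → W)
    (chat c : W →L[ℝ] ℝ) : ℝ :=
  sSup ((fun w => (c - (2 : ℝ) • chat) w) '' convexHull ℝ V)
    + 2 * chat (wstar c) - c (wstar c)

private lemma vertex_mem_opt {V : Set W} {c : W →L[ℝ] ℝ} {v : W} (hv : v ∈ V)
    (hmin : ∀ v' ∈ V, c v ≤ c v') : v ∈ Opt V c := by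
  refine ⟨subset_convexHull ℝ V hv, fun w hw => ?_⟩
  have hs : convexHull ℝ V ⊆ {w | c v ≤ c w} :=
    convexHull_min hmin (convex_halfSpace_ge (c.toLinearMap.isLinear) _)
  exact hs hw

private lemma exists_vertex_opt {V : Set W} (hVfin : V.Finite) (hVne : V.Nonempty)
    (c : W →L[ℝ] ℝ) : ∃ v ∈ V, ∀ v' ∈ V, c v ≤ c v' :=
  Set.exists_min_image V c hVfin hVne

private lemma opt_subsingleton {V : Set W} {c : W →L[ℝ] ℝ} (hc : c ∉ Degen V) :
    ∀ ⦃w₁⦄, w₁ ∈ Opt V c → ∀ ⦃w₂⦄, w₂ ∈ Opt V c → w₁ = w₂ := by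
  intro w₁ h₁ w₂ h₂
  by_contra hne
  exact hc ⟨w₁, h₁, w₂, h₂, hne⟩

private lemma not_degen {V : Set W} {chat c' : W →L[ℝ] ℝ} (h : ‖chat - c'‖ < nuS V chat) :
    c' ∉ Degen V := fun hmem => absurd (Metric.infDist_le_dist_of_mem hmem)
  (by rw [dist_eq_norm]; exact not_le.2 h)

private lemma key (V : Set W) (hVfin : V.Finite) (hVne : V.Nonempty)
    (chat c' : W →L[ℝ] ℝ) (h : ‖chat - c'‖ < nuS V chat) :
    ∃ v, v ∈ Opt V chat ∧ v ∈ Opt V c' := by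
  have hnu : (0:ℝ) < nuS V chat := lt_of_le_of_lt (norm_nonneg _) h
  have hchat_nd : chat ∉ Degen V :=
    not_degen (show ‖chat - chat‖ < nuS V chat by simpa using hnu)
  set ct : ℝ → (W →L[ℝ] ℝ) := fun t => chat + t • (c' - chat) with hct
  have hnd : ∀ t ∈ Set.Icc (0:ℝ) 1, ct t ∉ Degen V := by
    intro t ht
    apply not_degen
    have : ‖chat - ct t‖ = |t| * ‖c' - chat‖ := by
      have h1 : chat - ct t = -(t • (c' - chat)) := by simp [hct]
      rw [h1, norm_neg, norm_smul t (c' - chat), Real.norm_eq_abs]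
    calc ‖chat - ct t‖ = |t| * ‖c' - chat‖ := this
      _ ≤ 1 * ‖c' - chat‖ := by
          apply mul_le_mul_of_nonneg_right _ (norm_nonneg _)
          rw [abs_le]; exact ⟨le_trans (by norm_num) ht.1, ht.2⟩
      _ = ‖chat - c'‖ := by rw [one_mul, norm_sub_rev]
      _ < nuS V chat := h
  set I : W → Set ℝ := fun v => {t : ℝ | ∀ v' ∈ V, ct t v ≤ ct t v'} with hI
  have hIclosed : ∀ v, IsClosed (I v) := by
    intro v
    have : I v = ⋂ v' ∈ V, {t : ℝ | ct t v ≤ ct t v'} := by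
      ext t; simp [hI]
    rw [this]
    refine isClosed_biInter fun v' _ => isClosed_le ?_ ?_
    all_goals
      simp only [hct, ContinuousLinearMap.add_apply, ContinuousLinearMap.smul_apply, smul_eq_mul]
      fun_prop
  have hmemI : ∀ t, ∀ v ∈ V, t ∈ I v → v ∈ Opt V (ct t) := fun t v hv ht =>
    vertex_mem_opt hv ht
  obtain ⟨v₀, hv₀V, hv₀min⟩ := exists_vertex_opt hVfin hVne chat
  have hct0 : ct 0 = chat := by simp [hct]
  have hct1 : ct 1 = c' := by simp [hct]
  have hv₀opt : v₀ ∈ Opt V chat := vertex_mem_opt hv₀V hv₀min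
  -- connectedness argument
  have hpc : IsPreconnected (Set.Icc (0:ℝ) 1) := isPreconnected_Icc
  set U : Set ℝ := (⋃ v ∈ V \ {v₀}, I v)ᶜ with hU
  set U' : Set ℝ := (I v₀)ᶜ with hU'
  have hUopen : IsOpen U := by
    rw [hU, isOpen_compl_iff]
    exact (hVfin.diff : (V \ {v₀}).Finite).isClosed_biUnion fun v _ => hIclosed v
  have hU'open : IsOpen U' := (hIclosed v₀).isOpen_compl
  have hcover : Set.Icc (0:ℝ) 1 ⊆ U ∪ U' := by
    intro t ht
    by_contra hcon
    simp only [Set.mem_union, hU, hU', Set.mem_compl_iff, not_or, not_not] at hcon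
    obtain ⟨h1, h2⟩ := hcon
    simp only [Set.mem_iUnion] at h1
    obtain ⟨v, ⟨hvV, hvne⟩, hvI⟩ := h1
    exact hvne (opt_subsingleton (hnd t ht) (hmemI t v hvV hvI) (hmemI t v₀ hv₀V h2))
  have h0U : (0:ℝ) ∈ U := by
    rw [hU, Set.mem_compl_iff]
    intro h1
    simp only [Set.mem_iUnion] at h1
    obtain ⟨v, ⟨hvV, hvne⟩, hvI⟩ := h1
    have h0I : (0:ℝ) ∈ I v₀ := by
      intro v' hv'; rw [hct0]; exact hv₀min v' hv'
    exact hvne (opt_subsingleton (hnd 0 (by norm_num)) (hmemI 0 v hvV hvI)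
      (hmemI 0 v₀ hv₀V h0I))
  have hdisj : Disjoint U U' := by
    rw [Set.disjoint_iff_inter_eq_empty]
    ext t
    simp only [Set.mem_inter_iff, Set.mem_empty_iff_false, iff_false, not_and, hU, hU',
      Set.mem_compl_iff, not_not]
    intro h1
    obtain ⟨v, hvV, hvmin⟩ := exists_vertex_opt hVfin hVne (ct t)
    by_contra h2
    rcases eq_or_ne v v₀ with rfl | hne
    · exact h2 hvmin
    · exact h1 (Set.mem_biUnion ⟨hvV, hne⟩ hvmin)
  have hIccU : Set.Icc (0:ℝ) 1 ⊆ U := by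
    rcases hpc.subset_or_subset hUopen hU'open hdisj hcover with h1 | h1
    · exact h1
    · exact absurd (h1 ⟨le_refl 0, by norm_num⟩)
        (by simp only [hU', Set.mem_compl_iff, not_not]
            intro v' hv'; rw [hct0]; exact hv₀min v' hv')
  have h1U : (1:ℝ) ∈ U := hIccU ⟨by norm_num, le_refl 1⟩
  obtain ⟨v, hvV, hvmin⟩ := exists_vertex_opt hVfin hVne (ct 1)
  have hveq : v = v₀ := by
    by_contra hne
    exact h1U (Set.mem_biUnion ⟨hvV, hne⟩ hvmin)
  refine ⟨v₀, hv₀opt, ?_⟩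
  rw [← hct1]
  exact vertex_mem_opt hv₀V (hveq ▸ hvmin)

/-- If `‖ĉ − c‖ < ν_S(ĉ)` then `w*(c) = w*(ĉ)` and `w*(2ĉ − c) = w*(ĉ)`, and consequently
`ℓ_SPO+(ĉ, c) = 0` and `ℓ_SPO(ĉ, c) = 0`. -/
theorem stmt_1 (V : Set W) (hVfin : V.Finite) (hVne : V.Nonempty)
    (wstar : (W →L[ℝ] ℝ) → W) (hwstar : ∀ c, wstar c ∈ Opt V c)
    (chat c : W →L[ℝ] ℝ) (h : ‖chat - c‖ < nuS V chat) :
    wstar c = wstar chat ∧ wstar ((2 : ℝ) • chat - c) = wstar chat ∧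
      SPOPlusLoss V wstar chat c = 0 ∧ SPOLoss wstar chat c = 0 := by

  have hnu : (0:ℝ) < nuS V chat := lt_of_le_of_lt (norm_nonneg _) h
  have hchat_nd : chat ∉ Degen V :=
    not_degen (show ‖chat - chat‖ < nuS V chat by simpa using hnu)
  have hcnd : c ∉ Degen V := not_degen h
  obtain ⟨v, hvchat, hvc⟩ := key V hVfin hVne chat c h
  have e1 : wstar c = wstar chat := by
    rw [opt_subsingleton hcnd (hwstar c) hvc,
      opt_subsingleton hchat_nd (hwstar chat) hvchat]
  have h2 : ‖chat - ((2:ℝ) • chat - c)‖ < nuS V chat := by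
    have hh : chat - ((2:ℝ) • chat - c) = c - chat := by module
    rw [hh, norm_sub_rev]; exact h
  have hc2nd : ((2:ℝ) • chat - c) ∉ Degen V := not_degen h2
  obtain ⟨v', hv'chat, hv'c2⟩ := key V hVfin hVne chat _ h2
  have e2 : wstar ((2:ℝ) • chat - c) = wstar chat := by
    rw [opt_subsingleton hc2nd (hwstar _) hv'c2,
      opt_subsingleton hchat_nd (hwstar chat) hv'chat]
  have e4 : SPOLoss wstar chat c = 0 := by
    unfold SPOLoss; rw [e1]; ring
  have hsup : sSup ((fun w => (c - (2:ℝ) • chat) w) '' convexHull ℝ V)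
      = (c - (2:ℝ) • chat) (wstar ((2:ℝ) • chat - c)) := by
    apply IsGreatest.csSup_eq
    constructor
    · exact ⟨_, (hwstar _).1, rfl⟩
    · rintro x ⟨w, hw, rfl⟩
      have hle := (hwstar ((2:ℝ) • chat - c)).2 w hw
      simp only [ContinuousLinearMap.sub_apply, ContinuousLinearMap.smul_apply,
        smul_eq_mul] at hle ⊢
      linarith
  refine ⟨e1, e2, ?_, e4⟩
  unfold SPOPlusLoss
  rw [hsup, e2, e1]
  simp only [ContinuousLinearMap.sub_apply, ContinuousLinearMap.smul_apply, smul_eq_mul]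
  ring
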